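/- Formally substituting the Laurent expansion y(z) = (z-a)^{-2} + (a/10)(z-a)² + (1/6)(z-a)³ + b(z-a)⁴ + ⋯ into the perturbed oscillator potential Q(λ;y,y',z) = 4λ³ - 2λz + 2zy - 4y³ + y'² + y'/(λ-y) + 3/(4(λ-y)²) and letting z → a yields, for each fixed λ ≠ values of y, the limit Q → 4λ³ - 2aλ - 28b; i.e. the perturbed oscillator degenerates to the cubic oscillator ψ'' = (4λ³ - 2aλ - 28b)ψ. -/

import Mathlib

open Filter Topology

/-- The perturbed cubic oscillator potential
Q(λ;y,y',z) = 4λ³ - 2λz + 2zy - 4y³ + y'² + y'/(λ-y) + 3/(4(λ-y)²). -/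
noncomputable def perturbedPotential (lam y y' z : ℂ) : ℂ :=
  4 * lam ^ 3 - 2 * lam * z + 2 * z * y - 4 * y ^ 3 + y' ^ 2
    + y' / (lam - y) + 3 / (4 * (lam - y) ^ 2)

/-! With `w = z - a` the expansion reads `y = (1 + w⁴ A) / w²` and `y' = (-2 + w⁴ B) / w³`,
where `A = a/10 + w/6 + b w² + O(w³)` and `B = 2A + w A'` are holomorphic at `a`. After
substitution, the double pole of `2zy - 4y³ + y'²` cancels because the coefficient of `w²` in
`y` is `a/10`, and its simple pole `-2/w` cancels against the `2/w` coming from `y'/(λ - y)`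
because the coefficient of `w³` is `1/6`. Both cancellations are encoded in the single relation
`2(a + w) - 12A - 4B = -w (2 + 28 b w + w² c)` with `c` holomorphic, and then
`Q = 4λ³ - 2aλ - 28b + w R` with `R` continuous at `w = 0`, since `λ - y ~ -w⁻²` there. -/

noncomputable def potentialRemainder (lam a w A B c : ℂ) : ℂ :=
  -2 * lam - c + w * (2 * (a + w) * A - 12 * A ^ 2 + B ^ 2) - 4 * w ^ 5 * A ^ 3
    + (-2 * lam + w ^ 2 * (2 * A + B)) / (lam * w ^ 2 - 1 - w ^ 4 * A)
    + 3 * w ^ 3 / (4 * (lam * w ^ 2 - 1 - w ^ 4 * A) ^ 2)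

theorem perturbedPotential_eq_add_mul_remainder (lam a b w A B c : ℂ) (hw : w ≠ 0)
    (hD : lam * w ^ 2 - 1 - w ^ 4 * A ≠ 0)
    (hAB : 2 * (a + w) - 12 * A - 4 * B = -w * (2 + 28 * b * w + w ^ 2 * c)) :
    perturbedPotential lam ((1 + w ^ 4 * A) / w ^ 2) ((-2 + w ^ 4 * B) / w ^ 3) (a + w)
      = 4 * lam ^ 3 - 2 * a * lam - 28 * b + w * potentialRemainder lam a w A B c := by
  obtain rfl : B = (2 * (a + w) - 12 * A + w * (2 + 28 * b * w + w ^ 2 * c)) / 4 := by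
    linear_combination -hAB / 4
  set D := lam * w ^ 2 - 1 - w ^ 4 * A with hD_def
  have hsub : lam - (1 + w ^ 4 * A) / w ^ 2 = D / w ^ 2 := by
    field_simp
    ring
  unfold perturbedPotential potentialRemainder
  rw [hsub, ← hD_def]
  clear_value D
  field_simp
  rw [hD_def]
  ring

theorem continuousAt_potentialRemainder (lam a : ℂ) {A B c : ℂ → ℂ}
    (hA : ContinuousAt A a) (hB : ContinuousAt B a) (hc : ContinuousAt c a) :
    ContinuousAt (fun z => potentialRemainder lam a (z - a) (A z) (B z) (c z)) a := by
  unfold potentialRemainder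
  fun_prop (disch := simp)

theorem laurent_eq_div (a b z H : ℂ) (hz : z ≠ a) :
    (z - a) ^ (-2 : ℤ) + (a / 10) * (z - a) ^ 2 + (1 / 6) * (z - a) ^ 3
        + b * (z - a) ^ 4 + (z - a) ^ 5 * H
      = (1 + (z - a) ^ 4 * (a / 10 + (z - a) / 6 + b * (z - a) ^ 2 + (z - a) ^ 3 * H))
        / (z - a) ^ 2 := by
  have hw : z - a ≠ 0 := sub_ne_zero.mpr hz
  rw [zpow_neg, zpow_ofNat]
  field_simp
  ring

theorem hasDerivAt_laurent (a b : ℂ) {h : ℂ → ℂ} {z h' : ℂ} (hz : z ≠ a)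
    (hh : HasDerivAt h h' z) :
    HasDerivAt (fun x => (x - a) ^ (-2 : ℤ) + (a / 10) * (x - a) ^ 2 + (1 / 6) * (x - a) ^ 3
        + b * (x - a) ^ 4 + (x - a) ^ 5 * h x)
      ((-2 + (z - a) ^ 4 * (a / 5 + (z - a) / 2 + 4 * b * (z - a) ^ 2
        + (z - a) ^ 3 * (5 * h z + (z - a) * h'))) / (z - a) ^ 3) z := by
  have hw : z - a ≠ 0 := sub_ne_zero.mpr hz
  have hsub : HasDerivAt (fun x : ℂ => x - a) 1 z := (hasDerivAt_id z).sub_const a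
  have hpole := (hasDerivAt_zpow (-2) (z - a) (Or.inl hw)).comp z hsub
  refine ((((hpole.add ((hsub.pow 2).const_mul (a / 10))).add
    ((hsub.pow 3).const_mul (1 / 6))).add ((hsub.pow 4).const_mul b)).add
    ((hsub.pow 5).mul hh)).congr_deriv ?_
  rw [show (-2 - 1 : ℤ) = -3 by norm_num, zpow_neg]
  simp only [Pi.pow_apply]
  push_cast
  field_simp
  ring

theorem deriv_eventuallyEq_laurent (a b : ℂ) {y h : ℂ → ℂ}
    (hh : ∀ᶠ z in 𝓝 a, DifferentiableAt ℂ h z)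
    (hlaurent : ∀ᶠ z in 𝓝[≠] a,
      y z = (z - a) ^ (-2 : ℤ) + (a / 10) * (z - a) ^ 2 + (1 / 6) * (z - a) ^ 3
          + b * (z - a) ^ 4 + (z - a) ^ 5 * h z) :
    deriv y =ᶠ[𝓝[≠] a] fun z => (-2 + (z - a) ^ 4 * (a / 5 + (z - a) / 2
      + 4 * b * (z - a) ^ 2 + (z - a) ^ 3 * (5 * h z + (z - a) * deriv h z))) / (z - a) ^ 3 := by
  filter_upwards [Filter.EventuallyEq.nhdsNE_deriv hlaurent, nhdsWithin_le_nhds hh,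
    self_mem_nhdsWithin] with z hz hhz hza
  rw [hz]
  exact (hasDerivAt_laurent a b hza hhz.hasDerivAt).deriv

theorem perturbedPotential_tendsto_cubic_general (a b : ℂ) (y h : ℂ → ℂ)
    (hh : AnalyticAt ℂ h a)
    (hlaurent : ∀ᶠ z in 𝓝[≠] a,
      y z = (z - a) ^ (-2 : ℤ) + (a / 10) * (z - a) ^ 2 + (1 / 6) * (z - a) ^ 3
          + b * (z - a) ^ 4 + (z - a) ^ 5 * h z)
    (lam : ℂ) :
    Tendsto (fun z => perturbedPotential lam (y z) (deriv y z) z) (𝓝[≠] a)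
      (𝓝 (4 * lam ^ 3 - 2 * a * lam - 28 * b)) := by
  set A : ℂ → ℂ := fun z => a / 10 + (z - a) / 6 + b * (z - a) ^ 2 + (z - a) ^ 3 * h z
  set B : ℂ → ℂ := fun z => a / 5 + (z - a) / 2 + 4 * b * (z - a) ^ 2
    + (z - a) ^ 3 * (5 * h z + (z - a) * deriv h z)
  set c : ℂ → ℂ := fun z => 32 * h z + 4 * (z - a) * deriv h z
  have hcont := hh.continuousAt
  have hcont' := hh.deriv.continuousAt
  have hD : ∀ᶠ z in 𝓝 a, lam * (z - a) ^ 2 - 1 - (z - a) ^ 4 * A z ≠ 0 := by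
    have : ContinuousAt (fun z => lam * (z - a) ^ 2 - 1 - (z - a) ^ 4 * A z) a := by fun_prop
    exact this.eventually_ne (by simp)
  have hQ : ∀ᶠ z in 𝓝[≠] a, perturbedPotential lam (y z) (deriv y z) z
      = 4 * lam ^ 3 - 2 * a * lam - 28 * b
        + (z - a) * potentialRemainder lam a (z - a) (A z) (B z) (c z) := by
    filter_upwards [hlaurent, deriv_eventuallyEq_laurent a b
      (hh.eventually_analyticAt.mono fun _ hz => hz.differentiableAt) hlaurent,
      nhdsWithin_le_nhds hD, self_mem_nhdsWithin] with z hy hy' hDz hza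
    rw [hy, hy', laurent_eq_div a b z (h z) hza]
    simpa using perturbedPotential_eq_add_mul_remainder lam a b (z - a) (A z) (B z) (c z)
      (sub_ne_zero.mpr hza) hDz (by ring)
  have hR := continuousAt_potentialRemainder lam a (A := A) (B := B) (c := c)
    (by fun_prop) (by fun_prop) (by fun_prop)
  have hwR : Tendsto (fun z => (z - a) * potentialRemainder lam a (z - a) (A z) (B z) (c z))
      (𝓝 a) (𝓝 0) := by
    simpa using ((continuous_sub_right a).tendsto a).mul hR.tendsto
  refine (tendsto_congr' hQ).2 ?_
  simpa using (tendsto_const_nhds.add hwR).mono_left nhdsWithin_le_nhds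

/-- substituting the Laurent expansion
y(z) = (z-a)⁻² + (a/10)(z-a)² + (1/6)(z-a)³ + b(z-a)⁴ + ⋯ of a Painlevé I solution into
the perturbed oscillator potential Q(λ;y,y',z) and letting z → a yields, for each
fixed λ, the limit 4λ³ - 2aλ - 28b: the perturbed oscillator degenerates to the cubic
oscillator ψ'' = (4λ³ - 2aλ - 28b)ψ. -/
theorem perturbedPotential_tendsto_cubic (a b : ℂ) (r : ℝ) (hr : 0 < r) (y h : ℂ → ℂ)
    (hy : DifferentiableOn ℂ y (Metric.ball a r \ {a}))
    (hh : AnalyticAt ℂ h a)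
    (hlaurent : ∀ᶠ z in 𝓝[≠] a,
      y z = (z - a) ^ (-2 : ℤ) + (a / 10) * (z - a) ^ 2 + (1 / 6) * (z - a) ^ 3
          + b * (z - a) ^ 4 + (z - a) ^ 5 * h z)
    (lam : ℂ) :
    Tendsto (fun z => perturbedPotential lam (y z) (deriv y z) z) (𝓝[≠] a)
      (𝓝 (4 * lam ^ 3 - 2 * a * lam - 28 * b)) :=
  perturbedPotential_tendsto_cubic_general a b y h hh hlaurent lam
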